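/- arXiv:1408.1291 — 2 statements merged into one kernel-verified Lean document; each statement's English description precedes it below -/
import Mathlib

section
/- Let X be a smooth surface of general type with K_X^2 = 2 and χ(O_X) ≥ 3. Then any connected étale cover of X has degree at most 1, i.e., the étale fundamental group of X is trivial. -/
/-- For a smooth surface of general type `X` with `K_X² = 2` and
`χ(O_X) ≥ 3`, any connected étale cover has degree at most `1`, i.e. the
étale fundamental group of `X` is trivial.  For an étale cover `Y → X` of
degree `n` one has `K_Y² = n·K_X²`, `χ(O_Y) = n·χ(O_X)`, Noether's
inequality `K_Y² ≥ 2p_g(Y) − 4`, and `p_g(Y) ≥ χ(O_Y) − 1`. -/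
theorem etale_trivial_of_K2_two_chi_ge_three
    (n K2X K2Y chiX chiY pgY : ℤ)
    (hn : 1 ≤ n)
    (hK2X : K2X = 2)
    (hchiX : 3 ≤ chiX)
    (hmulK : K2Y = n * K2X)
    (hmulchi : chiY = n * chiX)
    (hNoether : 2 * pgY - 4 ≤ K2Y)
    (hpg : chiY - 1 ≤ pgY) :
    n = 1 := by
  nlinarith [mul_le_mul_of_nonneg_left hchiX (by linarith : (0:ℤ) ≤ n)]
end

section
/- Let k be a field of characteristic 2 and D = f·∂/∂x + g·∂/∂y a derivation of k[x,y] (or of a local ring O at a point with maximal ideal m) with f, g ∈ m having no common factor. If D² = 0 and at least one of f, g lies in m \ m², then one derives a contradiction; hence D² = 0 forces f, g ∈ m². -/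
open MvPolynomial

private lemma my_coeff_pderiv {σ : Type*} [DecidableEq σ] {k : Type*} [CommSemiring k]
    (i : σ) (d : σ →₀ ℕ) (p : MvPolynomial σ k) :
    coeff d (pderiv i p) = ((d i + 1 : ℕ) : k) * coeff (d + Finsupp.single i 1) p := by
  induction p using MvPolynomial.induction_on' with
  | add p q hp hq => simp [hp, hq, mul_add]
  | monomial s a =>
    rw [pderiv_monomial, coeff_monomial, coeff_monomial]
    by_cases hs : s i = 0
    · have h2 : s ≠ d + Finsupp.single i 1 := by
        intro h
        have := DFunLike.congr_fun h i
        simp [Finsupp.single_apply] at this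
        omega
      rw [if_neg h2, hs]
      simp
    · by_cases hd : s = d + Finsupp.single i 1
      · have h1 : s - Finsupp.single i 1 = d := by
          subst hd; exact add_tsub_cancel_right d (Finsupp.single i 1)
        have h2 : d i + 1 = s i := by subst hd; simp
        rw [if_pos h1, if_pos hd, h2, mul_comm]
      · have h1 : s - Finsupp.single i 1 ≠ d := by
          intro h
          apply hd
          rw [← h]
          ext j
          simp only [Finsupp.add_apply, Finsupp.tsub_apply, Finsupp.single_apply]
          rcases eq_or_ne i j with rfl | hij
          · simp; omega
          · simp [hij]
        rw [if_neg h1, if_neg hd, mul_zero]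

private lemma my_deg0_le_of_dvd {k : Type*} [Field k] {p q : MvPolynomial (Fin 2) k}
    (h : p ∣ q) (hq : q ≠ 0) : degreeOf 0 p ≤ degreeOf 0 q := by
  rw [← natDegree_finSuccEquiv, ← natDegree_finSuccEquiv]
  exact Polynomial.natDegree_le_of_dvd (map_dvd (finSuccEquiv k 1) h)
    (by simpa using (finSuccEquiv k 1).injective.ne_iff.mpr (by simpa using hq))

private lemma my_key0 {k : Type*} [Field k] (p : MvPolynomial (Fin 2) k)
    (h : p ∣ pderiv 0 p) : pderiv 0 p = 0 := by
  by_contra hne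
  have hdeg0 : 0 < degreeOf 0 p := by
    rcases Nat.eq_zero_or_pos (degreeOf 0 p) with h' | h'
    swap
    · exact h'
    · exfalso; apply hne
      ext d
      rw [my_coeff_pderiv, coeff_zero]
      have hz : coeff (d + Finsupp.single 0 1) p = 0 := by
        by_contra hc
        have := Finset.le_sup (f := fun m : Fin 2 →₀ ℕ => m 0)
          (mem_support_iff.mpr hc)
        rw [← degreeOf_eq_sup, h'] at this
        simp at this
      rw [hz, mul_zero]
  have hlt : degreeOf 0 (pderiv 0 p) < degreeOf 0 p := by
    rw [degreeOf_lt_iff hdeg0]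
    intro m hm
    have hc : coeff m (pderiv 0 p) ≠ 0 := mem_support_iff.mp hm
    rw [my_coeff_pderiv] at hc
    have hc2 : coeff (m + Finsupp.single 0 1) p ≠ 0 := fun hz => hc (by rw [hz, mul_zero])
    have := Finset.le_sup (f := fun m : Fin 2 →₀ ℕ => m 0) (mem_support_iff.mpr hc2)
    rw [← degreeOf_eq_sup] at this
    simp at this
    omega
  exact absurd (my_deg0_le_of_dvd h hne) (not_le.mpr hlt)

private lemma my_key {k : Type*} [Field k] (i : Fin 2) (p : MvPolynomial (Fin 2) k)
    (h : p ∣ pderiv i p) : pderiv i p = 0 := by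
  fin_cases i
  · exact my_key0 p h
  · set e := Equiv.swap (0 : Fin 2) 1 with he
    have he1 : e 1 = 0 := Equiv.swap_apply_right 0 1
    have hre : pderiv 0 (rename e p) = rename e (pderiv 1 p) := by
      rw [← he1]; exact pderiv_rename e.injective 1 p
    have : pderiv 0 (rename e p) = 0 := by
      apply my_key0
      rw [hre]
      exact map_dvd (rename (R := k) e) h
    rw [hre] at this
    exact rename_injective (R := k) e e.injective (by rw [map_zero]; exact this)

private lemma my_even {k : Type*} [Field k] [CharP k 2] (i : Fin 2)
    (p : MvPolynomial (Fin 2) k) (h : pderiv i p = 0)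
    (d : Fin 2 →₀ ℕ) (hd : d ∈ p.support) : Even (d i) := by
  by_contra hodd
  rw [Nat.not_even_iff_odd] at hodd
  obtain ⟨l, hl⟩ := hodd
  have hdi : 1 ≤ d i := by omega
  have hd' : (d - Finsupp.single i 1) + Finsupp.single i 1 = d :=
    tsub_add_cancel_of_le (Finsupp.single_le_iff.mpr hdi)
  have hco := my_coeff_pderiv i (d - Finsupp.single i 1) p
  rw [h, coeff_zero, hd'] at hco
  have hdi2 : ((d - Finsupp.single i 1 : Fin 2 →₀ ℕ)) i + 1 = d i := by
    rw [Finsupp.tsub_apply, Finsupp.single_eq_same]; omega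
  rw [hdi2, hl] at hco
  have hcast : ((2 * l + 1 : ℕ) : k) = 1 := by
    push_cast
    rw [CharTwo.two_eq_zero]
    ring
  rw [hcast, one_mul] at hco
  exact mem_support_iff.mp hd hco.symm

/-- In characteristic 2, if `D = f·∂/∂x + g·∂/∂y` is a derivation of
`k[x,y]` with `f, g` in the maximal ideal `m` at a point, having no common factor,
and `D² = 0`, then `f, g ∈ m²`. -/
theorem additive_vector_field_coeffs_in_m_sq
    (k : Type*) [Field k] [CharP k 2]
    (f g : MvPolynomial (Fin 2) k)
    (m : Ideal (MvPolynomial (Fin 2) k))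
    (hm : m = Ideal.span {X 0, X 1})
    (hf : f ∈ m) (hg : g ∈ m)
    (hcop : IsRelPrime f g)
    (D : MvPolynomial (Fin 2) k → MvPolynomial (Fin 2) k)
    (hD : ∀ a, D a = f * pderiv 0 a + g * pderiv 1 a)
    (hD2 : ∀ a, D (D a) = 0) :
    f ∈ m ^ 2 ∧ g ∈ m ^ 2 := by
  -- evaluation at the origin kills m
  have heval : ∀ p ∈ m, eval (fun _ => (0 : k)) p = 0 := by
    intro p hp
    rw [hm] at hp
    have hle : Ideal.span {(X 0 : MvPolynomial (Fin 2) k), X 1} ≤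
        RingHom.ker (eval (fun _ => (0 : k))) := by
      rw [Ideal.span_le]
      rintro q hq
      simp only [Set.mem_insert_iff, Set.mem_singleton_iff] at hq
      rcases hq with rfl | rfl <;> simp [RingHom.mem_ker]
    exact hle hp
  have hf0 : f ≠ 0 := by
    rintro rfl
    have hu := isRelPrime_zero_left.mp hcop
    have := (hu.map (eval (fun _ => (0 : k)))).ne_zero
    exact this (heval g hg)
  have hg0 : g ≠ 0 := by
    rintro rfl
    have hu := isRelPrime_zero_right.mp hcop
    have := (hu.map (eval (fun _ => (0 : k)))).ne_zero
    exact this (heval f hf)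
  -- D(X0) = f, D(X1) = g
  have hDX0 : D (X 0) = f := by
    rw [hD]; simp [pderiv_X_self, pderiv_X_of_ne (show (0 : Fin 2) ≠ 1 by decide)]
  have hDX1 : D (X 1) = g := by
    rw [hD]; simp [pderiv_X_self, pderiv_X_of_ne (show (1 : Fin 2) ≠ 0 by decide)]
  have hDf : f * pderiv 0 f + g * pderiv 1 f = 0 := by
    have := hD2 (X 0); rw [hDX0, hD] at this; exact this
  have hDg : f * pderiv 0 g + g * pderiv 1 g = 0 := by
    have := hD2 (X 1); rw [hDX1, hD] at this; exact this
  -- char 2 rewriting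
  have h1 : g * pderiv 1 f = f * pderiv 0 f := by
    have := CharTwo.add_eq_iff_eq_add.mp hDf
    rw [zero_add] at this
    exact this.symm
  have h2 : f * pderiv 0 g = g * pderiv 1 g := by
    have := CharTwo.add_eq_iff_eq_add.mp hDg
    rw [zero_add] at this
    exact this
  -- f ∣ ∂₁f and g ∣ ∂₀g
  have hf1 : pderiv 1 f = 0 := by
    apply my_key
    exact hcop.dvd_of_dvd_mul_left ⟨pderiv 0 f, h1⟩
  have hg1 : pderiv 0 g = 0 := by
    apply my_key
    exact hcop.symm.dvd_of_dvd_mul_left ⟨pderiv 1 g, h2⟩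
  have hf2 : pderiv 0 f = 0 := by
    have : f * pderiv 0 f = 0 := by rw [← h1, hf1, mul_zero]
    rcases mul_eq_zero.mp this with h | h
    · exact absurd h hf0
    · exact h
  have hg2 : pderiv 1 g = 0 := by
    have : g * pderiv 1 g = 0 := by rw [← h2, hg1, mul_zero]
    rcases mul_eq_zero.mp this with h | h
    · exact absurd h hg0
    · exact h
  -- monomial ideal membership
  have hXmem : ∀ i : Fin 2, (X i : MvPolynomial (Fin 2) k) ∈ m := by
    intro i
    rw [hm]
    apply Ideal.subset_span
    fin_cases i <;> simp
  have hsq : Ideal.span {(X 0 : MvPolynomial (Fin 2) k) ^ 2, X 1 ^ 2} ≤ m ^ 2 := by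
    rw [Ideal.span_le]
    rintro q hq
    simp only [Set.mem_insert_iff, Set.mem_singleton_iff] at hq
    rcases hq with rfl | rfl <;>
      · rw [sq, sq]
        exact Ideal.mul_mem_mul (hXmem _) (hXmem _)
  have hsupp : ∀ p : MvPolynomial (Fin 2) k, p ∈ m →
      pderiv 0 p = 0 → pderiv 1 p = 0 → p ∈ m ^ 2 := by
    intro p hp hp0 hp1
    apply hsq
    have himg : ({(X 0 : MvPolynomial (Fin 2) k) ^ 2, X 1 ^ 2} : Set _) =
        (fun s => monomial s (1 : k)) '' {Finsupp.single 0 2, Finsupp.single 1 2} := by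
      rw [Set.image_insert_eq, Set.image_singleton, X_pow_eq_monomial, X_pow_eq_monomial]
    rw [himg, mem_ideal_span_monomial_image]
    intro d hd
    have hne : ∃ i ∈ ({0, 1} : Set (Fin 2)), d i ≠ 0 := by
      have hpX : p ∈ Ideal.span (MvPolynomial.X '' ({0, 1} : Set (Fin 2)) :
          Set (MvPolynomial (Fin 2) k)) := by
        rw [Set.image_insert_eq, Set.image_singleton]
        rw [hm] at hp
        exact hp
      exact (mem_ideal_span_X_image.mp hpX) d hd
    have he0 : Even (d 0) := my_even 0 p hp0 d hd
    have he1 : Even (d 1) := my_even 1 p hp1 d hd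
    obtain ⟨a, ha⟩ := he0
    obtain ⟨b, hb⟩ := he1
    obtain ⟨i, hi, hni⟩ := hne
    simp only [Set.mem_insert_iff, Set.mem_singleton_iff] at hi
    rcases hi with rfl | rfl
    · refine ⟨Finsupp.single 0 2, by simp, ?_⟩
      rw [Finsupp.single_le_iff]
      omega
    · refine ⟨Finsupp.single 1 2, by simp, ?_⟩
      rw [Finsupp.single_le_iff]
      omega
  exact ⟨hsupp f hf hf2 hf1, hsupp g hg hg1 hg2⟩
end
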